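/- arXiv:math/9908171 — 2 statements merged into one kernel-verified Lean document; each statement's English description precedes it below -/
import Mathlib

section
/- In the free Z[c]-algebra A with basis {1, X}, multiplication 1·1=1, 1·X=X·1=X, X²=0, and comultiplication Δ(1)=1⊗X+X⊗1+cX⊗X, Δ(X)=X⊗X, the identity Δ∘m = (m⊗Id)∘(Id⊗Δ) holds as maps A⊗A → A⊗A (tensor products over Z[c]). -/
open TensorProduct

noncomputable section

abbrev R : Type := Polynomial ℤ
abbrev A : Type := R × R

/-- The `R`-linear map out of `A = R·1 ⊕ R·X` sending `1 ↦ p` and `X ↦ q`. -/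
def lmap {P : Type*} [AddCommGroup P] [Module R P] (p q : P) : A →ₗ[R] P :=
  (LinearMap.toSpanSingleton R P p).coprod (LinearMap.toSpanSingleton R P q)

/-- The basis element `1` of `A`. -/
def one' : A := (1, 0)

/-- The basis element `X` of `A`. -/
def Xa : A := (0, 1)

/-- Multiplication `m : A ⊗ A → A`, with `1·1 = 1`, `1·X = X·1 = X`, `X² = 0`. -/
def mul : A ⊗[R] A →ₗ[R] A :=
  TensorProduct.lift (lmap LinearMap.id (lmap Xa 0))

/-- Comultiplication `Δ(1) = 1⊗X + X⊗1 + c X⊗X`, `Δ(X) = X⊗X`. -/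
def Δ : A →ₗ[R] A ⊗[R] A :=
  lmap (one' ⊗ₜ[R] Xa + Xa ⊗ₜ[R] one' + (Polynomial.X : R) • (Xa ⊗ₜ[R] Xa)) (Xa ⊗ₜ[R] Xa)

/-- Counit `ε(1) = -c`, `ε(X) = 1`. -/
def ε : A →ₗ[R] R := lmap (-Polynomial.X) 1

section lmap

variable {P : Type*} [AddCommGroup P] [Module R P] (p q : P)

@[simp]
theorem lmap_one' : lmap p q one' = p := by
  simp [lmap, one']

@[simp]
theorem lmap_Xa : lmap p q Xa = q := by
  simp [lmap, Xa]

theorem A_tensor_ext {f g : A ⊗[R] A →ₗ[R] P}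
    (h11 : f (one' ⊗ₜ one') = g (one' ⊗ₜ one')) (h1X : f (one' ⊗ₜ Xa) = g (one' ⊗ₜ Xa))
    (hX1 : f (Xa ⊗ₜ one') = g (Xa ⊗ₜ one')) (hXX : f (Xa ⊗ₜ Xa) = g (Xa ⊗ₜ Xa)) : f = g := by
  ext <;> assumption

end lmap

@[simp]
theorem mul_one'_tmul (a : A) : mul (one' ⊗ₜ a) = a := by
  simp [mul]

@[simp]
theorem mul_Xa_tmul_one' : mul (Xa ⊗ₜ one') = Xa := by
  simp [mul]

@[simp]
theorem mul_Xa_tmul_Xa : mul (Xa ⊗ₜ Xa) = 0 := by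
  simp [mul]

@[simp]
theorem Δ_one' :
    Δ one' = one' ⊗ₜ[R] Xa + Xa ⊗ₜ[R] one' + (Polynomial.X : R) • (Xa ⊗ₜ[R] Xa) :=
  lmap_one' _ _

@[simp]
theorem Δ_Xa : Δ Xa = Xa ⊗ₜ[R] Xa :=
  lmap_Xa _ _

/-- `Δ ∘ m = (m ⊗ Id) ∘ (Id ⊗ Δ)` as maps `A⊗A → A⊗A`. -/
theorem stmt0 :
    Δ ∘ₗ mul =
      (TensorProduct.map mul LinearMap.id) ∘ₗ
        ((TensorProduct.assoc R A A A).symm.toLinearMap ∘ₗ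
          (TensorProduct.map LinearMap.id Δ)) := by
  refine A_tensor_ext ?_ ?_ ?_ ?_ <;> simp [tmul_add]
end
end

section
/- Let ι: A → A⊗A be defined by ι(t) = 1⊗t, m: A⊗A → A the multiplication, and Δ the comultiplication, and set j = Δ − ι∘m∘Δ : A → A⊗A. Then A⊗A = ι(A) ⊕ j(A) as R-modules. -/
open TensorProduct

noncomputable section

/-- `ι : A → A⊗A`, `t ↦ 1⊗t`. -/
def ι : A →ₗ[R] A ⊗[R] A := TensorProduct.mk R A A one'

/-- `j = Δ − ι∘m∘Δ`. -/
def jmath : A →ₗ[R] A ⊗[R] A := Δ - ι ∘ₗ mul ∘ₗ Δ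


lemma lmap_apply {P : Type*} [AddCommGroup P] [Module R P] (p q : P) (t : A) :
    lmap p q t = t.1 • p + t.2 • q := rfl

@[simp] lemma one'_fst : one'.1 = 1 := rfl
@[simp] lemma one'_snd : one'.2 = 0 := rfl
@[simp] lemma Xa_fst : Xa.1 = 0 := rfl
@[simp] lemma Xa_snd : Xa.2 = 1 := rfl

lemma iota_apply (t : A) : ι t = one' ⊗ₜ[R] t := rfl

lemma jmath_apply (t : A) :
    jmath t = t.1 • (Xa ⊗ₜ[R] one') - t.1 • (one' ⊗ₜ[R] Xa)
      + (t.1 * Polynomial.X) • (Xa ⊗ₜ[R] Xa) + t.2 • (Xa ⊗ₜ[R] Xa) := by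
  simp only [jmath, Δ, mul, LinearMap.sub_apply, LinearMap.comp_apply, lmap_apply,
    map_add, map_smul, lift.tmul, LinearMap.id_apply, LinearMap.zero_apply, iota_apply,
    one'_fst, one'_snd, Xa_fst, Xa_snd, one_smul, zero_smul, smul_zero, add_zero, zero_add,
    tmul_add, tmul_smul, mul_smul]
  module

lemma prod_eq (p : A) : p = p.1 • one' + p.2 • Xa := by
  ext <;> simp [one', Xa]

/-- `A⊗A = ι(A) ⊕ j(A)` as `R`-modules. -/
theorem stmt6 :
    IsCompl (LinearMap.range ι) (LinearMap.range jmath) := by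
  set B := (Module.Basis.finTwoProd R).tensorProduct (Module.Basis.finTwoProd R) with hB
  constructor
  · rw [Submodule.disjoint_def]
    rintro v ⟨s, rfl⟩ ⟨t, ht⟩
    have h10 := congrArg (fun z => B.repr z (1, 0)) ht
    have h11 := congrArg (fun z => B.repr z (1, 1)) ht
    simp only [hB, jmath_apply, iota_apply, map_add, map_sub, map_smul, Finsupp.add_apply,
      Finsupp.sub_apply, Finsupp.smul_apply, Module.Basis.tensorProduct_repr_tmul_apply,
      Module.Basis.coe_finTwoProd_repr, one'_fst, one'_snd, Xa_fst, Xa_snd] at h10 h11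
    simp only [Matrix.cons_val_zero, Matrix.cons_val_one, Matrix.head_cons] at h10 h11
    norm_num at h10 h11
    have ht1 : t.1 = 0 := by linear_combination h10
    have ht2 : t.2 = 0 := by linear_combination h11 - Polynomial.X * h10
    rw [← ht, jmath_apply, ht1, ht2]
    simp
  · rw [codisjoint_iff, eq_top_iff]
    rintro v -
    set S := LinearMap.range ι ⊔ LinearMap.range jmath with hS
    induction v using TensorProduct.induction_on with
    | zero => exact zero_mem _
    | add x y hx hy => exact add_mem hx hy
    | tmul p q =>
      have h1 : one' ⊗ₜ[R] one' ∈ S := Submodule.mem_sup_left ⟨one', rfl⟩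
      have h2 : one' ⊗ₜ[R] Xa ∈ S := Submodule.mem_sup_left ⟨Xa, rfl⟩
      have h3 : Xa ⊗ₜ[R] Xa ∈ S := by
        have : Xa ⊗ₜ[R] Xa = jmath Xa := by rw [jmath_apply]; simp
        exact this ▸ Submodule.mem_sup_right ⟨Xa, rfl⟩
      have h4 : Xa ⊗ₜ[R] one' ∈ S := by
        have : Xa ⊗ₜ[R] one' = jmath one' + ι Xa - (Polynomial.X : R) • jmath Xa := by
          rw [jmath_apply, jmath_apply, iota_apply]; simp; module
        rw [this]
        exact sub_mem (add_mem (Submodule.mem_sup_right ⟨one', rfl⟩)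
          (Submodule.mem_sup_left ⟨Xa, rfl⟩))
          (Submodule.smul_mem _ _ (Submodule.mem_sup_right ⟨Xa, rfl⟩))
      have hexp : p ⊗ₜ[R] q = (p.1 * q.1) • one' ⊗ₜ[R] one' + (p.1 * q.2) • one' ⊗ₜ[R] Xa
          + (p.2 * q.1) • Xa ⊗ₜ[R] one' + (p.2 * q.2) • Xa ⊗ₜ[R] Xa := by
        conv_lhs => rw [prod_eq p, prod_eq q]
        simp only [add_tmul, tmul_add, ← smul_tmul', tmul_smul, smul_smul]
        module
      rw [hexp]
      exact add_mem (add_mem (add_mem (Submodule.smul_mem _ _ h1) (Submodule.smul_mem _ _ h2))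
        (Submodule.smul_mem _ _ h4)) (Submodule.smul_mem _ _ h3)
end
end
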